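/- Let Y be a random variable on a probability space taking values in a finite subset S of the real numbers, and suppose the diameter of S (the maximum distance between two points of S) is at most D. Then the variance of Y satisfies Var[Y] ≤ D² · H(Y), where H(Y) is the Shannon entropy of Y measured in nats (natural logarithm). (This is the paper's inequality Var[Y] ≤ K · H(Y) for discrete distributions with bounded support, with the explicit constant K = D².) -/

import Mathlib

open MeasureTheory ProbabilityTheory Real

/-- Shannon entropy (in nats) of a random variable `Y` taking values in the finite set `S`:
`H(Y) = ∑ s ∈ S, -P(Y = s) * log P(Y = s)` (with the convention `0 * log 0 = 0`). -/
noncomputable def finEntropy {Ω α : Type*} [MeasurableSpace Ω]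
    (μ : Measure Ω) (S : Finset α) (Y : Ω → α) : ℝ :=
  ∑ s ∈ S, Real.negMulLog (μ (Y ⁻¹' {s})).toReal

/-!
Write `p s = P(Y = s)` and `m = E[Y] = ∑ p t * t`. Since `s - m = ∑_{t ≠ s} p t * (s - t)`, every
deviation satisfies `|s - m| ≤ D * (1 - p s)`. Hence
`Var[Y] = ∑ p s * (s - m)² ≤ D² ∑ p s * (1 - p s)² ≤ D² ∑ p s * (1 - p s)`,
and `p * (1 - p) ≤ -p * log p` is `log p ≤ p - 1`.
-/
lemma Real.mul_one_sub_le_negMulLog {p : ℝ} (hp : 0 ≤ p) : p * (1 - p) ≤ negMulLog p := by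
  rcases hp.eq_or_lt with rfl | hp
  · simp
  · rw [negMulLog, neg_mul, ← mul_neg]
    gcongr
    linarith [log_le_sub_one_of_pos hp]

section WeightedMean

variable {S : Finset ℝ} {p : ℝ → ℝ} {D : ℝ}

lemma abs_sub_weightedMean_le (hp : ∀ s ∈ S, 0 ≤ p s) (hp1 : ∑ s ∈ S, p s = 1)
    (hdiam : ∀ s ∈ S, ∀ t ∈ S, |s - t| ≤ D) {s : ℝ} (hs : s ∈ S) :
    |s - ∑ t ∈ S, p t * t| ≤ D * (1 - p s) := by
  have hdev : s - ∑ t ∈ S, p t * t = ∑ t ∈ S.erase s, p t * (s - t) := by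
    rw [Finset.sum_erase _ (by simp), ← sub_eq_zero]
    simp only [mul_sub, Finset.sum_sub_distrib, ← Finset.sum_mul, hp1]
    ring
  have hrest : ∑ t ∈ S.erase s, p t = 1 - p s := by
    rw [← hp1, ← Finset.sum_erase_add _ _ hs, add_sub_cancel_right]
  calc |s - ∑ t ∈ S, p t * t| ≤ ∑ t ∈ S.erase s, |p t * (s - t)| :=
        hdev ▸ Finset.abs_sum_le_sum_abs _ _
    _ ≤ ∑ t ∈ S.erase s, p t * D := by
        refine Finset.sum_le_sum fun t ht => ?_
        have ht := Finset.mem_of_mem_erase ht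
        rw [abs_mul, abs_of_nonneg (hp t ht)]
        exact mul_le_mul_of_nonneg_left (hdiam s hs t ht) (hp t ht)
    _ = D * (1 - p s) := by rw [← Finset.sum_mul, hrest, mul_comm]

lemma sum_mul_sq_sub_weightedMean_le (hp : ∀ s ∈ S, 0 ≤ p s) (hp1 : ∑ s ∈ S, p s = 1)
    (hdiam : ∀ s ∈ S, ∀ t ∈ S, |s - t| ≤ D) :
    ∑ s ∈ S, p s * (s - ∑ t ∈ S, p t * t) ^ 2 ≤ D ^ 2 * ∑ s ∈ S, negMulLog (p s) := by
  rw [Finset.mul_sum]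
  refine Finset.sum_le_sum fun s hs => ?_
  have hps1 : p s ≤ 1 := hp1 ▸ Finset.single_le_sum hp hs
  have hdev := abs_sub_weightedMean_le hp hp1 hdiam hs
  calc p s * (s - ∑ t ∈ S, p t * t) ^ 2 ≤ p s * (D * (1 - p s)) ^ 2 := by
        rw [← sq_abs]
        gcongr
        exact hp s hs
    _ = D ^ 2 * (p s * (1 - p s) * (1 - p s)) := by ring
    _ ≤ D ^ 2 * (p s * (1 - p s)) := by
        gcongr
        exact mul_le_of_le_one_right (hp s hs) (sub_le_self _ (hp s hs))
    _ ≤ D ^ 2 * negMulLog (p s) := by gcongr; exact mul_one_sub_le_negMulLog (hp s hs)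

end WeightedMean

section FiniteRange

variable {Ω : Type*} [MeasurableSpace Ω] {μ : Measure Ω} {Y : Ω → ℝ} {S : Finset ℝ}

lemma sum_measureReal_preimage_singleton_eq_one [IsProbabilityMeasure μ] (hY : Measurable Y)
    (hYS : ∀ ω, Y ω ∈ S) : ∑ s ∈ S, μ.real (Y ⁻¹' {s}) = 1 := by
  rw [sum_measureReal_preimage_singleton S fun s _ => hY (measurableSet_singleton s),
    Set.preimage_eq_univ_iff.2 fun _ ⟨ω, hω⟩ => hω ▸ hYS ω, probReal_univ]

lemma integral_comp_eq_sum_measureReal [IsFiniteMeasure μ] (hY : Measurable Y)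
    (hYS : ∀ ω, Y ω ∈ S) (g : ℝ → ℝ) :
    ∫ ω, g (Y ω) ∂μ = ∑ s ∈ S, μ.real (Y ⁻¹' {s}) * g s := by
  have hfiber : ∀ ω, g (Y ω) = ∑ s ∈ S, (Y ⁻¹' {s}).indicator (fun _ => g s) ω := by
    intro ω
    classical
    simp only [Set.indicator_apply, Set.mem_preimage, Set.mem_singleton_iff]
    rw [Finset.sum_ite_eq, if_pos (hYS ω)]
  rw [integral_congr_ae (ae_of_all μ hfiber), integral_finsetSum S fun s _ =>
    (integrable_const (g s)).indicator (hY (measurableSet_singleton s))]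
  refine Finset.sum_congr rfl fun s _ => ?_
  rw [integral_indicator_const _ (hY (measurableSet_singleton s)), smul_eq_mul]

end FiniteRange

/-- If `Y` takes values in a finite set `S ⊆ ℝ` of diameter at most `D`, then
`Var[Y] ≤ D² · H(Y)` where `H(Y)` is the Shannon entropy in nats. -/
theorem variance_le_sq_diam_mul_entropy
    {Ω : Type*} [MeasurableSpace Ω] (μ : Measure Ω) [IsProbabilityMeasure μ]
    (Y : Ω → ℝ) (hYmeas : Measurable Y)
    (S : Finset ℝ) (hYS : ∀ ω, Y ω ∈ S)
    (D : ℝ) (hdiam : ∀ s ∈ S, ∀ t ∈ S, |s - t| ≤ D) :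
    variance Y μ ≤ D ^ 2 * finEntropy μ S Y := by
  have hmean : μ[Y] = ∑ s ∈ S, μ.real (Y ⁻¹' {s}) * s :=
    integral_comp_eq_sum_measureReal hYmeas hYS id
  rw [variance_eq_integral hYmeas.aemeasurable,
    integral_comp_eq_sum_measureReal hYmeas hYS (fun y => (y - μ[Y]) ^ 2), hmean]
  exact sum_mul_sq_sub_weightedMean_le (fun _ _ => measureReal_nonneg)
    (sum_measureReal_preimage_singleton_eq_one hYmeas hYS) hdiam
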